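/- Suppose A is a right H-comodule algebra with B = A^{co H} and γ : H → A is a convolution-invertible H-comodule map with γ(1) = 1. Define σ'(h ⊗ g) = Σ γ(h₍₁₎) γ(g₍₁₎) γ⁻¹(h₍₂₎ g₍₂₎). Then σ'(h ⊗ g) ∈ B for all h, g ∈ H, the induced map σ : H ⊗ H → B is convolution invertible with inverse induced by ω'(h ⊗ g) = Σ γ(h₍₁₎ g₍₁₎) γ⁻¹(g₍₂₎) γ⁻¹(h₍₂₎), and σ satisfies the 2-cocycle condition and normalization σ(h,1) = σ(1,h) = ε(h)1_B with respect to the weak action h·b = Σ γ(h₍₁₎) b γ⁻¹(h₍₂₎). -/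

import Mathlib

open TensorProduct LinearMap

noncomputable section

namespace CrossedGalois

/-- Convolution product of two linear maps from a coalgebra to an algebra. -/
def conv (k : Type) [Field k] {C B : Type} [AddCommGroup C] [Module k C] [Coalgebra k C]
    [Ring B] [Algebra k B] (f g : C →ₗ[k] B) : C →ₗ[k] B :=
  (LinearMap.mul' k B) ∘ₗ (TensorProduct.map f g) ∘ₗ (Coalgebra.comul (R := k))

/-- The unit `η ∘ ε` for the convolution product. -/
def convOne (k : Type) [Field k] (C B : Type) [AddCommGroup C] [Module k C] [Coalgebra k C]
    [Ring B] [Algebra k B] : C →ₗ[k] B :=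
  (Algebra.linearMap k B) ∘ₗ (Coalgebra.counit (R := k))

/-- Convolution invertibility. -/
def ConvInvertible (k : Type) [Field k] {C B : Type} [AddCommGroup C] [Module k C]
    [Coalgebra k C] [Ring B] [Algebra k B] (f : C →ₗ[k] B) : Prop :=
  ∃ g : C →ₗ[k] B, conv k f g = convOne k C B ∧ conv k g f = convOne k C B

variable (k : Type) [Field k]

section CrossedProduct

variable (B H : Type) [Ring B] [Algebra k B] [Ring H] [Bialgebra k H]

/-- `h ↦ α (h ⊗ b)`. -/
def actOn (α : H ⊗[k] B →ₗ[k] B) (b : B) : H →ₗ[k] B :=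
  α ∘ₗ ((TensorProduct.mk k H B).flip b)

/-- `α` is a weak action of the bialgebra `H` on the algebra `B` :
`h · (ab) = Σ (h₁ · a)(h₂ · b)` and `h · 1 = ε(h) 1`. -/
structure IsWeakAction (α : H ⊗[k] B →ₗ[k] B) : Prop where
  smul_mul : ∀ (h : H) (a b : B),
    α (h ⊗ₜ (a * b)) =
      LinearMap.mul' k B ((TensorProduct.map α α)
        ((TensorProduct.tensorTensorTensorComm k H H B B)
          ((Coalgebra.comul (R := k) h) ⊗ₜ (a ⊗ₜ b))))
  smul_one : ∀ h : H, α (h ⊗ₜ (1 : B)) = (Coalgebra.counit (R := k) h) • (1 : B)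

/-- The 2-cocycle condition
`Σ (h₁ · σ(g₁,l₁)) σ(h₂, g₂l₂) = Σ σ(h₁,g₁) σ(h₂g₂, l)`
together with the normalisation `σ(h,1) = σ(1,h) = ε(h)1`. -/
structure IsCocycle (α : H ⊗[k] B →ₗ[k] B) (σ : H ⊗[k] H →ₗ[k] B) : Prop where
  cocycle :
    conv k (α ∘ₗ lTensor H σ) (σ ∘ₗ lTensor H (LinearMap.mul' k H)) =
    conv k (σ ∘ₗ lTensor H ((TensorProduct.rid k H).toLinearMap ∘ₗ
              lTensor H (Coalgebra.counit (R := k))))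
           (σ ∘ₗ (rTensor H (LinearMap.mul' k H)) ∘ₗ
              (TensorProduct.assoc k H H H).symm.toLinearMap)
  norm_right : ∀ h : H, σ (h ⊗ₜ (1 : H)) = (Coalgebra.counit (R := k) h) • (1 : B)
  norm_left : ∀ h : H, σ ((1 : H) ⊗ₜ h) = (Coalgebra.counit (R := k) h) • (1 : B)

/-- `B` is a twisted `H`-module:  `1 · b = b` and
`Σ (h₁ · (g₁ · b)) σ(h₂,g₂) = Σ σ(h₁,g₁) ((h₂g₂) · b)`. -/
structure IsTwistedModule (α : H ⊗[k] B →ₗ[k] B) (σ : H ⊗[k] H →ₗ[k] B) : Prop where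
  one_smul : ∀ b : B, α ((1 : H) ⊗ₜ b) = b
  twisted : ∀ b : B,
    conv k (α ∘ₗ lTensor H (actOn k B H α b)) σ =
    conv k σ ((actOn k B H α b) ∘ₗ LinearMap.mul' k H)

/-- The multiplication of the crossed product `B #_σ H`:
`(a # h)(b # g) = Σ a (h₁·b) σ(h₂,g₁) # h₃g₂`. -/
def cpMul (α : H ⊗[k] B →ₗ[k] B) (σ : H ⊗[k] H →ₗ[k] B) :
    (B ⊗[k] H) ⊗[k] (B ⊗[k] H) →ₗ[k] B ⊗[k] H :=
  (rTensor H (LinearMap.mul' k B)) ∘ₗ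
  (TensorProduct.assoc k B B H).symm.toLinearMap ∘ₗ
  (lTensor B
    ((rTensor H (LinearMap.mul' k B)) ∘ₗ
     (TensorProduct.assoc k B B H).symm.toLinearMap ∘ₗ
     (TensorProduct.map α (TensorProduct.map σ (LinearMap.mul' k H))) ∘ₗ
     (lTensor (H ⊗[k] B) (TensorProduct.tensorTensorTensorComm k H H H H).toLinearMap) ∘ₗ
     (TensorProduct.tensorTensorTensorComm k H (H ⊗[k] H) B (H ⊗[k] H)).toLinearMap ∘ₗ
     (TensorProduct.map ((lTensor H (Coalgebra.comul (R := k))) ∘ₗ (Coalgebra.comul (R := k)))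
       (lTensor B (Coalgebra.comul (R := k)))))) ∘ₗ
  (TensorProduct.assoc k B H (B ⊗[k] H)).toLinearMap

/-- The unit `1 # 1` of the crossed product. -/
def cpOne : B ⊗[k] H := (1 : B) ⊗ₜ (1 : H)

/-- The crossed product multiplication is associative with unit `1 ⊗ 1`. -/
def IsCpAlgebra (α : H ⊗[k] B →ₗ[k] B) (σ : H ⊗[k] H →ₗ[k] B) : Prop :=
  (∀ x y z : B ⊗[k] H,
      cpMul k B H α σ ((cpMul k B H α σ (x ⊗ₜ y)) ⊗ₜ z) =
      cpMul k B H α σ (x ⊗ₜ (cpMul k B H α σ (y ⊗ₜ z)))) ∧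
  (∀ x : B ⊗[k] H, cpMul k B H α σ ((cpOne k B H) ⊗ₜ x) = x) ∧
  (∀ x : B ⊗[k] H, cpMul k B H α σ (x ⊗ₜ (cpOne k B H)) = x)

/-- The right `H`-coaction `id_B ⊗ Δ` on `B ⊗ H`. -/
def cpCoact : B ⊗[k] H →ₗ[k] (B ⊗[k] H) ⊗[k] H :=
  (TensorProduct.assoc k B H H).symm.toLinearMap ∘ₗ lTensor B (Coalgebra.comul (R := k))

end CrossedProduct

section Galois

variable (H : Type) [Ring H] [Bialgebra k H]

/-- The submodule of `A ⊗ A` spanned by `xb ⊗ y - x ⊗ by` for `b` in a given subset `S`,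
with respect to a given multiplication map `M`; its quotient is `A ⊗_B A`. -/
def midRel {A : Type} [AddCommGroup A] [Module k A]
    (M : A ⊗[k] A →ₗ[k] A) (S : Set A) : Submodule k (A ⊗[k] A) :=
  Submodule.span k {z | ∃ x y b, b ∈ S ∧
    z = (M (x ⊗ₜ b)) ⊗ₜ y - x ⊗ₜ (M (b ⊗ₜ y))}

/-- The map `can' : A ⊗ A → A ⊗ H`, `x ⊗ y ↦ Σ x y₍₀₎ ⊗ y₍₁₎`. -/
def canMap {A : Type} [AddCommGroup A] [Module k A]
    (M : A ⊗[k] A →ₗ[k] A) (ρ : A →ₗ[k] A ⊗[k] H) : A ⊗[k] A →ₗ[k] A ⊗[k] H :=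
  (rTensor H M) ∘ₗ (TensorProduct.assoc k A A H).symm.toLinearMap ∘ₗ (lTensor A ρ)

/-- The extension is `H`-Galois: the canonical map descends to a bijection
`A ⊗_B A → A ⊗ H`. -/
def IsGalois {A : Type} [AddCommGroup A] [Module k A]
    (M : A ⊗[k] A →ₗ[k] A) (ρ : A →ₗ[k] A ⊗[k] H) (S : Set A) : Prop :=
  ∃ can : ((A ⊗[k] A) ⧸ midRel k M S) →ₗ[k] A ⊗[k] H,
    can ∘ₗ (midRel k M S).mkQ = canMap k H M ρ ∧ Function.Bijective can

/-- `A` is a right `H`-comodule algebra. -/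
structure IsComodAlg {A : Type} [Ring A] [Algebra k A]
    (ρ : A →ₗ[k] A ⊗[k] H) : Prop where
  coassoc : ∀ a : A, (rTensor H ρ) (ρ a) =
    (TensorProduct.assoc k A H H).symm ((lTensor A (Coalgebra.comul (R := k))) (ρ a))
  counit_id : ∀ a : A,
    (TensorProduct.rid k A) ((lTensor A (Coalgebra.counit (R := k))) (ρ a)) = a
  mul : ∀ a b : A, ρ (a * b) = ρ a * ρ b
  one : ρ 1 = 1

end Galois

end CrossedGalois

namespace CrossedGalois

/-- `h ⊗ a ↦ Σ γ(h₁) a μ(h₂)`. -/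
def actL (k A H : Type) [Field k] [Ring A] [Algebra k A] [Ring H] [Bialgebra k H]
    (γ μ : H →ₗ[k] A) : H ⊗[k] A →ₗ[k] A :=
  (LinearMap.mul' k A) ∘ₗ (lTensor A (LinearMap.mul' k A)) ∘ₗ
  (TensorProduct.map γ (lTensor A μ)) ∘ₗ
  (lTensor H (TensorProduct.comm k H A).toLinearMap) ∘ₗ
  (TensorProduct.assoc k H H A).toLinearMap ∘ₗ
  (rTensor A (Coalgebra.comul (R := k)))

/-- `σ(h,g) = Σ γ(h₁) γ(g₁) μ(h₂ g₂)`. -/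
def sigMap (k A H : Type) [Field k] [Ring A] [Algebra k A] [Ring H] [Bialgebra k H]
    (γ μ : H →ₗ[k] A) : H ⊗[k] H →ₗ[k] A :=
  conv k ((LinearMap.mul' k A) ∘ₗ TensorProduct.map γ γ) (μ ∘ₗ LinearMap.mul' k H)

/-- `ω(h,g) = Σ γ(h₁ g₁) μ(g₂) μ(h₂)`. -/
def omgMap (k A H : Type) [Field k] [Ring A] [Algebra k A] [Ring H] [Bialgebra k H]
    (γ μ : H →ₗ[k] A) : H ⊗[k] H →ₗ[k] A :=
  conv k (γ ∘ₗ LinearMap.mul' k H)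
    ((LinearMap.mul' k A) ∘ₗ (TensorProduct.map μ μ) ∘ₗ (TensorProduct.comm k H H).toLinearMap)

end CrossedGalois

/-!
Everything happens in the convolution monoids `WithConv (C →ₗ A)`. Precomposition with a
coalgebra map and postcomposition with an algebra map are monoid homomorphisms, so for the
convolution unit `u = γ` the map `σ = (u ∘ p₁) (u ∘ p₂) (u ∘ m)⁻¹` is a product of units, where
`p₁, p₂` are the two projections `H ⊗ H → H` and `m` the multiplication. Its inverse is visibly
`ω`. On `H ⊗ H ⊗ H`, with `xᵢ` the three projections, every composite of `p₁, p₂, m` with the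
maps occurring in the cocycle identity is one of `x₁, x₂, x₃, x₁x₂, x₂x₃, x₁x₂x₃`, and both sides
become the word `(u ∘ x₁) (u ∘ x₂) (u ∘ x₃) (u ∘ x₁x₂x₃)⁻¹` in the unit group.

For coinvariance, colinearity says `ρ ∘ γ = (γ ⊗ 1) * (1 ⊗ id)`, hence
`ρ ∘ γ⁻¹ = (1 ⊗ S) * (γ⁻¹ ⊗ 1)`; in `ρ ∘ σ` the factors `1 ⊗ h₁g₁` and `1 ⊗ S(h₂g₂)` commute past
the `γ`-factors and cancel.
-/

open WithConv Coalgebra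
open Bialgebra (mulCoalgHom)

namespace CrossedGalois

section Convolution

variable {R : Type*} [CommSemiring R] {C D A B : Type*}
  [AddCommMonoid C] [Module R C] [Coalgebra R C]
  [AddCommMonoid D] [Module R D] [Coalgebra R D]
  [Semiring A] [Algebra R A] [Semiring B] [Algebra R B]

def compCoalgHomConv (φ : C →ₗc[R] D) : WithConv (D →ₗ[R] A) →* WithConv (C →ₗ[R] A) where
  toFun f := toConv (f.ofConv ∘ₗ φ)
  map_one' := by
    ext c
    simp
  map_mul' f g := congrArg toConv (LinearMap.convMul_comp_coalgHom_distrib f g φ)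

@[simp]
lemma compCoalgHomConv_apply (φ : C →ₗc[R] D) (f : WithConv (D →ₗ[R] A)) :
    compCoalgHomConv φ f = toConv (f.ofConv ∘ₗ φ) := rfl

def algHomCompConv (Φ : A →ₐ[R] B) : WithConv (C →ₗ[R] A) →* WithConv (C →ₗ[R] B) where
  toFun f := toConv (Φ.toLinearMap ∘ₗ f.ofConv)
  map_one' := by
    ext c
    simp
  map_mul' f g := congrArg toConv (LinearMap.algHom_comp_convMul_distrib Φ f g)

@[simp]
lemma algHomCompConv_apply (Φ : A →ₐ[R] B) (f : WithConv (C →ₗ[R] A)) :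
    algHomCompConv Φ f = toConv (Φ.toLinearMap ∘ₗ f.ofConv) := rfl

lemma algHomCompConv_compCoalgHomConv (Φ : A →ₐ[R] B) (φ : C →ₗc[R] D)
    (f : WithConv (D →ₗ[R] A)) :
    algHomCompConv Φ (compCoalgHomConv φ f) = compCoalgHomConv φ (algHomCompConv Φ f) := rfl

end Convolution

section Projections

variable {R : Type*} [CommSemiring R] {C D A : Type*}
  [AddCommMonoid C] [Module R C] [Coalgebra R C]
  [AddCommMonoid D] [Module R D] [Coalgebra R D]
  [Semiring A] [Algebra R A]

variable (R C D) in
noncomputable def fstCoalgHom : C ⊗[R] D →ₗc[R] C :=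
  (Coalgebra.TensorProduct.rid R R C).toCoalgHom.comp
    (Coalgebra.TensorProduct.map (CoalgHom.id R C) (counitCoalgHom R D))

variable (R C D) in
noncomputable def sndCoalgHom : C ⊗[R] D →ₗc[R] D :=
  (Coalgebra.TensorProduct.lid R D).toCoalgHom.comp
    (Coalgebra.TensorProduct.map (counitCoalgHom R C) (CoalgHom.id R D))

@[simp]
lemma fstCoalgHom_tmul (c : C) (d : D) : fstCoalgHom R C D (c ⊗ₜ d) = counit (R := R) d • c := rfl

@[simp]
lemma sndCoalgHom_tmul (c : C) (d : D) : sndCoalgHom R C D (c ⊗ₜ d) = counit (R := R) c • d := rfl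

lemma _root_.Coalgebra.sum_smul_counit {c : C} {ι : Type*} (𝓡 : Repr R c ι) :
    ∑ i ∈ 𝓡.index, counit (R := R) (𝓡.right i) • 𝓡.left i = c := by
  simpa only [map_sum, TensorProduct.rid_tmul, one_smul] using
    congr(_root_.TensorProduct.rid R C $(sum_tmul_counit_eq 𝓡))

lemma toConv_comp_fst_mul_toConv_comp_snd (f : C →ₗ[R] A) (g : D →ₗ[R] A) :
    toConv (f ∘ₗ fstCoalgHom R C D) * toConv (g ∘ₗ sndCoalgHom R C D) =
      toConv (LinearMap.mul' R A ∘ₗ TensorProduct.map f g) := by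
  ext c d
  conv_rhs => rw [← sum_smul_counit (ℛ R c), ← sum_counit_smul (ℛ R d)]
  simp [TensorProduct.comul_tmul, ← (ℛ R c).eq, ← (ℛ R d).eq, TensorProduct.sum_tmul,
    TensorProduct.tmul_sum, Finset.smul_sum, smul_comm (counit (R := R) (_ : C))]

lemma toConv_comp_snd_mul_toConv_comp_fst (f : C →ₗ[R] A) (g : D →ₗ[R] A) :
    toConv (g ∘ₗ sndCoalgHom R C D) * toConv (f ∘ₗ fstCoalgHom R C D) =
      toConv (LinearMap.mul' R A ∘ₗ TensorProduct.map g f ∘ₗ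
        (TensorProduct.comm R C D).toLinearMap) := by
  ext c d
  conv_rhs => rw [← sum_counit_smul (ℛ R c), ← sum_smul_counit (ℛ R d)]
  simp [TensorProduct.comul_tmul, ← (ℛ R c).eq, ← (ℛ R d).eq, TensorProduct.sum_tmul,
    TensorProduct.tmul_sum, Finset.smul_sum]

lemma commute_toConv_comp_fst_toConv_comp_snd {f : C →ₗ[R] A} {g : D →ₗ[R] A}
    (h : ∀ c d, Commute (f c) (g d)) :
    Commute (toConv (f ∘ₗ (fstCoalgHom R C D : C ⊗[R] D →ₗ[R] C)))
      (toConv (g ∘ₗ (sndCoalgHom R C D : C ⊗[R] D →ₗ[R] D))) := by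
  rw [Commute, SemiconjBy, toConv_comp_fst_mul_toConv_comp_snd,
    toConv_comp_snd_mul_toConv_comp_fst]
  ext c d
  exact (h c d).eq

end Projections

section Coboundary

variable {R : Type*} [CommSemiring R] {H A E : Type*} [Semiring H] [Bialgebra R H]
  [Semiring A] [Algebra R A] [AddCommMonoid E] [Module R E] [Coalgebra R E]

def convCoboundary (u : (WithConv (H →ₗ[R] A))ˣ) : (WithConv (H ⊗[R] H →ₗ[R] A))ˣ :=
  u.map (compCoalgHomConv (fstCoalgHom R H H)) * u.map (compCoalgHomConv (sndCoalgHom R H H)) *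
    (u.map (compCoalgHomConv (mulCoalgHom R H)))⁻¹

lemma map_convCoboundary (u : (WithConv (H →ₗ[R] A))ˣ) (ψ : E →ₗc[R] H ⊗[R] H) :
    (convCoboundary u).map (compCoalgHomConv ψ) =
      u.map (compCoalgHomConv ((fstCoalgHom R H H).comp ψ)) *
        u.map (compCoalgHomConv ((sndCoalgHom R H H).comp ψ)) *
        (u.map (compCoalgHomConv ((mulCoalgHom R H).comp ψ)))⁻¹ := by
  simp only [convCoboundary, map_mul, map_inv]
  rfl

open Coalgebra.TensorProduct (map) in
lemma convCoboundary_cocycle (u : (WithConv (H →ₗ[R] A))ˣ) :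
    u.map (compCoalgHomConv (fstCoalgHom R H (H ⊗[R] H))) *
        (convCoboundary u).map (compCoalgHomConv (sndCoalgHom R H (H ⊗[R] H))) *
        (u.map (compCoalgHomConv (fstCoalgHom R H (H ⊗[R] H))))⁻¹ *
        (convCoboundary u).map (compCoalgHomConv (map (CoalgHom.id R H) (mulCoalgHom R H))) =
      (convCoboundary u).map (compCoalgHomConv (map (CoalgHom.id R H) (fstCoalgHom R H H))) *
        (convCoboundary u).map (compCoalgHomConv ((map (mulCoalgHom R H) (CoalgHom.id R H)).comp
          (Coalgebra.TensorProduct.assoc R R H H H).symm.toCoalgHom)) := by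
  have h₁ : (fstCoalgHom R H H).comp (map (CoalgHom.id R H) (mulCoalgHom R H)) =
      fstCoalgHom R H (H ⊗[R] H) := by
    apply CoalgHom.coe_linearMap_injective; ext; simp [mul_comm]
  have h₂ : (sndCoalgHom R H H).comp (map (CoalgHom.id R H) (mulCoalgHom R H)) =
      (mulCoalgHom R H).comp (sndCoalgHom R H (H ⊗[R] H)) := by
    apply CoalgHom.coe_linearMap_injective; ext; simp
  have h₃ : (fstCoalgHom R H H).comp (map (CoalgHom.id R H) (fstCoalgHom R H H)) =
      fstCoalgHom R H (H ⊗[R] H) := by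
    apply CoalgHom.coe_linearMap_injective; ext; simp [← mul_smul, mul_comm]
  have h₄ : (sndCoalgHom R H H).comp (map (CoalgHom.id R H) (fstCoalgHom R H H)) =
      (fstCoalgHom R H H).comp (sndCoalgHom R H (H ⊗[R] H)) := by
    apply CoalgHom.coe_linearMap_injective; ext; simp [← mul_smul, mul_comm]
  have h₅ : (fstCoalgHom R H H).comp ((map (mulCoalgHom R H) (CoalgHom.id R H)).comp
      (Coalgebra.TensorProduct.assoc R R H H H).symm.toCoalgHom) =
      (mulCoalgHom R H).comp (map (CoalgHom.id R H) (fstCoalgHom R H H)) := by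
    apply CoalgHom.coe_linearMap_injective; ext; simp
  have h₆ : (sndCoalgHom R H H).comp ((map (mulCoalgHom R H) (CoalgHom.id R H)).comp
      (Coalgebra.TensorProduct.assoc R R H H H).symm.toCoalgHom) =
      (sndCoalgHom R H H).comp (sndCoalgHom R H (H ⊗[R] H)) := by
    apply CoalgHom.coe_linearMap_injective; ext; simp [mul_smul]
  have h₇ : (mulCoalgHom R H).comp ((map (mulCoalgHom R H) (CoalgHom.id R H)).comp
      (Coalgebra.TensorProduct.assoc R R H H H).symm.toCoalgHom) =
      (mulCoalgHom R H).comp (map (CoalgHom.id R H) (mulCoalgHom R H)) := by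
    apply CoalgHom.coe_linearMap_injective; ext; simp [mul_assoc]
  simp only [map_convCoboundary, h₁, h₂, h₃, h₄, h₅, h₆, h₇]
  group

end Coboundary

section Antipode

variable {R : Type*} [CommSemiring R] {H : Type*} [Semiring H] [HopfAlgebra R H]

lemma fst_mul_snd_mul_antipode_comp_mul :
    toConv (fstCoalgHom R H H : H ⊗[R] H →ₗ[R] H) * toConv (sndCoalgHom R H H : H ⊗[R] H →ₗ[R] H) *
      toConv (HopfAlgebra.antipode R ∘ₗ LinearMap.mul' R H) = 1 := by
  have hmul :=
    toConv_comp_fst_mul_toConv_comp_snd (R := R) (C := H) (D := H) LinearMap.id LinearMap.id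
  simp only [TensorProduct.map_id, LinearMap.comp_id, LinearMap.id_comp] at hmul
  calc _ = compCoalgHomConv (mulCoalgHom R H)
        (toConv LinearMap.id * toConv (HopfAlgebra.antipode R)) := by
        rw [hmul, map_mul]
        rfl
    _ = 1 := by rw [LinearMap.id_mul_antipode, map_one]

end Antipode

section Colinear

open Algebra.TensorProduct

variable {R : Type*} [CommSemiring R] {A H : Type*} [Semiring A] [Algebra R A] [Semiring H]
  [Bialgebra R H]

lemma algHomCompConv_eq_of_colinear {ρ : A →ₐ[R] A ⊗[R] H} {γ : H →ₗ[R] A}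
    (hγ : ∀ h, ρ (γ h) = LinearMap.rTensor H γ (comul (R := R) h)) :
    algHomCompConv ρ (toConv γ) = algHomCompConv includeLeft (toConv γ) *
      toConv (includeRight : H →ₐ[R] A ⊗[R] H).toLinearMap := by
  ext h
  simp [hγ, ← (ℛ R h).eq, Algebra.TensorProduct.tmul_mul_tmul]

end Colinear

section Coinvariance

open Algebra.TensorProduct

variable {R : Type*} [CommSemiring R] {A H : Type*} [Semiring A] [Algebra R A] [Semiring H]
  [HopfAlgebra R H] {ρ : A →ₐ[R] A ⊗[R] H}

local notation "ιA" => (includeLeft : A →ₐ[R] A ⊗[R] H)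
local notation "ιH" => (includeRight : H →ₐ[R] A ⊗[R] H)

lemma algHomCompConv_inv_eq_of_colinear {u : (WithConv (H →ₗ[R] A))ˣ}
    (hu : algHomCompConv ρ u.val =
      algHomCompConv ιA u.val * toConv (ιH : H →ₗ[R] A ⊗[R] H)) :
    algHomCompConv ρ u⁻¹.val =
      algHomCompConv ιH (toConv (HopfAlgebra.antipode R)) * algHomCompConv ιA u⁻¹.val := by
  refine Units.inv_eq_of_mul_eq_one_left (u := u.map (algHomCompConv ρ)) ?_
  have hιH : toConv (ιH : H →ₗ[R] A ⊗[R] H) = algHomCompConv ιH (toConv LinearMap.id) := rfl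
  rw [Units.coe_map, hu, hιH, mul_assoc, ← mul_assoc (algHomCompConv ιA _), ← map_mul,
    Units.inv_mul, map_one, one_mul, ← map_mul, LinearMap.antipode_mul_id, map_one]

lemma algHomCompConv_convCoboundary {u : (WithConv (H →ₗ[R] A))ˣ}
    (hu : algHomCompConv ρ u.val =
      algHomCompConv ιA u.val * toConv (ιH : H →ₗ[R] A ⊗[R] H)) :
    algHomCompConv ρ (convCoboundary u).val =
      algHomCompConv ιA (convCoboundary u).val := by
  simp only [convCoboundary, Units.val_mul, Units.coe_map, Units.coe_map_inv, map_mul,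
    algHomCompConv_compCoalgHomConv, hu, algHomCompConv_inv_eq_of_colinear hu]
  have hcomm : Commute (compCoalgHomConv (fstCoalgHom R H H) (toConv (ιH : H →ₗ[R] A ⊗[R] H)))
      (compCoalgHomConv (sndCoalgHom R H H) (algHomCompConv ιA u)) :=
    commute_toConv_comp_fst_toConv_comp_snd fun _ _ ↦
      (Commute.one_left _).tmul (Commute.one_right _)
  have hcancel : ∀ x, compCoalgHomConv (fstCoalgHom R H H) (toConv (ιH : H →ₗ[R] A ⊗[R] H)) *
      (compCoalgHomConv (sndCoalgHom R H H) (toConv (ιH : H →ₗ[R] A ⊗[R] H)) *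
      (compCoalgHomConv (mulCoalgHom R H)
        (algHomCompConv ιH (toConv (HopfAlgebra.antipode R))) * x)) = x := by
    have := congrArg (algHomCompConv ιH) (fst_mul_snd_mul_antipode_comp_mul (R := R) (H := H))
    rw [map_mul, map_mul, map_one] at this
    intro x
    rw [← mul_assoc, ← mul_assoc]
    exact (congrArg (· * x) this).trans (one_mul x)
  simp only [mul_assoc]
  rw [hcomm.left_comm, hcancel]

end Coinvariance

section InducedCocycle

variable {k A H : Type} [Field k] [Ring A] [Algebra k A] [Ring H] [Bialgebra k H]

lemma toConv_sigMap (u : (WithConv (H →ₗ[k] A))ˣ) :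
    toConv (sigMap k A H u.val.ofConv u⁻¹.val.ofConv) = (convCoboundary u).val := by
  simp only [convCoboundary, Units.val_mul, Units.coe_map, Units.coe_map_inv,
    compCoalgHomConv_apply, toConv_comp_fst_mul_toConv_comp_snd]
  rfl

lemma toConv_omgMap (u : (WithConv (H →ₗ[k] A))ˣ) :
    toConv (omgMap k A H u.val.ofConv u⁻¹.val.ofConv) = (convCoboundary u)⁻¹.val := by
  simp only [convCoboundary, mul_inv_rev, inv_inv, Units.val_mul, Units.coe_map, Units.coe_map_inv,
    compCoalgHomConv_apply, mul_assoc, toConv_comp_snd_mul_toConv_comp_fst]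
  rfl

lemma sigMap_tmul_one (u : (WithConv (H →ₗ[k] A))ˣ) (hu : u.val.ofConv 1 = 1) (h : H) :
    sigMap k A H u.val.ofConv u⁻¹.val.ofConv (h ⊗ₜ 1) = Coalgebra.counit (R := k) h • 1 := by
  have hε := (ℛ k h).convMul_apply u.val u⁻¹.val
  rw [u.mul_inv] at hε
  simp [sigMap, conv, TensorProduct.comul_tmul, ← (ℛ k h).eq, TensorProduct.sum_tmul, hu,
    Algebra.TensorProduct.one_def, ← hε, Algebra.algebraMap_eq_smul_one]

lemma sigMap_one_tmul (u : (WithConv (H →ₗ[k] A))ˣ) (hu : u.val.ofConv 1 = 1) (h : H) :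
    sigMap k A H u.val.ofConv u⁻¹.val.ofConv (1 ⊗ₜ h) = Coalgebra.counit (R := k) h • 1 := by
  have hε := (ℛ k h).convMul_apply u.val u⁻¹.val
  rw [u.mul_inv] at hε
  simp [sigMap, conv, TensorProduct.comul_tmul, ← (ℛ k h).eq, TensorProduct.tmul_sum, hu,
    Algebra.TensorProduct.one_def, ← hε, Algebra.algebraMap_eq_smul_one]

lemma toConv_actL_comp_lTensor {D : Type} [AddCommGroup D] [Module k D] [Coalgebra k D]
    (u : (WithConv (H →ₗ[k] A))ˣ) (τ : D →ₗ[k] A) :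
    toConv (actL k A H u.val.ofConv u⁻¹.val.ofConv ∘ₗ LinearMap.lTensor H τ) =
      (u.map (compCoalgHomConv (fstCoalgHom k H D))).val *
        compCoalgHomConv (sndCoalgHom k H D) (toConv τ) *
        (u.map (compCoalgHomConv (fstCoalgHom k H D)))⁻¹.val := by
  rw [Units.coe_map, Units.coe_map_inv, compCoalgHomConv_apply, compCoalgHomConv_apply,
    toConv_comp_fst_mul_toConv_comp_snd]
  ext h d
  conv_lhs => rw [← sum_smul_counit (ℛ k d)]
  simp [actL, TensorProduct.comul_tmul, ← (ℛ k h).eq, ← (ℛ k d).eq, TensorProduct.sum_tmul,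
    TensorProduct.tmul_sum, Finset.smul_sum, mul_assoc]

lemma conv_sigMap_omgMap (u : (WithConv (H →ₗ[k] A))ˣ) :
    conv k (sigMap k A H u.val.ofConv u⁻¹.val.ofConv) (omgMap k A H u.val.ofConv u⁻¹.val.ofConv) =
      convOne k (H ⊗[k] H) A :=
  congrArg ofConv (show toConv (sigMap k A H _ _) * toConv (omgMap k A H _ _) = 1 by
    rw [toConv_sigMap, toConv_omgMap, Units.mul_inv])

lemma conv_omgMap_sigMap (u : (WithConv (H →ₗ[k] A))ˣ) :
    conv k (omgMap k A H u.val.ofConv u⁻¹.val.ofConv) (sigMap k A H u.val.ofConv u⁻¹.val.ofConv) =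
      convOne k (H ⊗[k] H) A :=
  congrArg ofConv (show toConv (omgMap k A H _ _) * toConv (sigMap k A H _ _) = 1 by
    rw [toConv_sigMap, toConv_omgMap, Units.inv_mul])

open Coalgebra.TensorProduct (map) in
lemma isCocycle_sigMap (u : (WithConv (H →ₗ[k] A))ˣ) (hu : u.val.ofConv 1 = 1) :
    IsCocycle k A H (actL k A H u.val.ofConv u⁻¹.val.ofConv)
      (sigMap k A H u.val.ofConv u⁻¹.val.ofConv) where
  cocycle := by
    apply toConv_injective
    show toConv (actL k A H _ _ ∘ₗ lTensor H (sigMap k A H _ _)) *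
        compCoalgHomConv (map (CoalgHom.id k H) (mulCoalgHom k H))
          (toConv (sigMap k A H _ _)) =
      compCoalgHomConv (map (CoalgHom.id k H) (fstCoalgHom k H H)) (toConv (sigMap k A H _ _)) *
        compCoalgHomConv ((map (mulCoalgHom k H) (CoalgHom.id k H)).comp
          (Coalgebra.TensorProduct.assoc k k H H H).symm.toCoalgHom) (toConv (sigMap k A H _ _))
    rw [toConv_actL_comp_lTensor u, toConv_sigMap]
    simpa only [Units.val_mul, Units.coe_map, Units.coe_map_inv] using
      congrArg Units.val (convCoboundary_cocycle u)
  norm_right := sigMap_tmul_one u hu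
  norm_left := sigMap_one_tmul u hu

end InducedCocycle

/-- `σ'(h,g) = Σ γ(h₁)γ(g₁)γ⁻¹(h₂g₂)` lands in `B`, is convolution
invertible with inverse `ω'(h,g) = Σ γ(h₁g₁)γ⁻¹(g₂)γ⁻¹(h₂)`, and is a normalized
2-cocycle for the induced weak action. -/
theorem induced_cocycle (k A H : Type) [Field k] [Ring A] [Algebra k A] [Ring H] [HopfAlgebra k H]
    (ρ : A →ₗ[k] A ⊗[k] H) (hA : IsComodAlg k H ρ)
    (S : Subalgebra k A) (hS : ∀ a : A, a ∈ S ↔ ρ a = a ⊗ₜ (1 : H))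
    (γ μ : H →ₗ[k] A)
    (hγcolin : ∀ h : H, ρ (γ h) = (rTensor H γ) (Coalgebra.comul (R := k) h))
    (hγone : γ (1 : H) = 1)
    (hconv : conv k γ μ = convOne k H A ∧ conv k μ γ = convOne k H A) :
    (∀ h g : H, sigMap k A H γ μ (h ⊗ₜ g) ∈ S) ∧
    conv k (sigMap k A H γ μ) (omgMap k A H γ μ) = convOne k (H ⊗[k] H) A ∧
    conv k (omgMap k A H γ μ) (sigMap k A H γ μ) = convOne k (H ⊗[k] H) A ∧
    IsCocycle k A H (actL k A H γ μ) (sigMap k A H γ μ) := by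
  obtain ⟨u, rfl, rfl⟩ : ∃ u : (WithConv (H →ₗ[k] A))ˣ, u.val.ofConv = γ ∧ u⁻¹.val.ofConv = μ :=
    ⟨⟨toConv γ, toConv μ, congrArg toConv hconv.1, congrArg toConv hconv.2⟩, rfl, rfl⟩
  have hcoinv := algHomCompConv_convCoboundary (ρ := AlgHom.ofLinearMap ρ hA.one hA.mul)
    (algHomCompConv_eq_of_colinear hγcolin)
  rw [← toConv_sigMap] at hcoinv
  exact ⟨fun h g ↦ (hS _).2 congr($(hcoinv).ofConv (h ⊗ₜ g)), conv_sigMap_omgMap u,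
    conv_omgMap_sigMap u, isCocycle_sigMap u hγone⟩

end CrossedGalois
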